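/- For every y > (1 + √3)/π, the second derivative of the function g(y) = 2(e^{πy} − 1)² − 4πy e^{πy}(e^{πy} − 1) + π² y² e^{πy}(e^{πy} + 1) satisfies g''(y) > 0. -/

import Mathlib

/-- The auxiliary function `g(y) = 2(e^{πy} − 1)² − 4πy e^{πy}(e^{πy} − 1)
+ π² y² e^{πy}(e^{πy} + 1)`. -/
noncomputable def gAux (y : ℝ) : ℝ :=
  2 * (Real.exp (Real.pi * y) - 1) ^ 2 -
    4 * Real.pi * y * Real.exp (Real.pi * y) * (Real.exp (Real.pi * y) - 1) +
    Real.pi ^ 2 * y ^ 2 * Real.exp (Real.pi * y) * (Real.exp (Real.pi * y) + 1)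

/-! With `u = πy` and `E = eᵘ`, `g` is `(u² − 4u + 2)E² + (u² + 4u − 4)E + 2`, an exponential
polynomial whose second derivative in `u` is `(4u² − 8u − 6)E² + (u² + 8u + 6)E`. Its
first coefficient is `4(u − 1)² − 10 > 2` for `u > 1 + √3`, the second is positive for `u > 0`,
and `g''(y)` is `π²` times this. -/

open Real

noncomputable def gProfile (u : ℝ) : ℝ :=
  (u ^ 2 - 4 * u + 2) * exp (2 * u) + (u ^ 2 + 4 * u - 4) * exp u + 2

lemma gAux_eq_gProfile_comp : gAux = fun y => gProfile (π * y) := by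
  funext y
  simp only [gAux, gProfile, mul_assoc, two_mul, exp_add]
  ring

lemma contDiff_gProfile : ContDiff ℝ 2 gProfile := by
  unfold gProfile
  fun_prop

lemma hasDerivAt_mul_exp_const_mul {f : ℝ → ℝ} {f' : ℝ} (a : ℝ) {u : ℝ}
    (hf : HasDerivAt f f' u) :
    HasDerivAt (fun x => f x * exp (a * x)) ((f' + a * f u) * exp (a * u)) u := by
  have hexp : HasDerivAt (fun x => exp (a * x)) (exp (a * u) * a) u :=
    ((hasDerivAt_id u).const_mul a).exp.congr_deriv (by simp)
  exact (hf.mul hexp).congr_deriv (by ring)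

lemma hasDerivAt_quadratic (b c u : ℝ) :
    HasDerivAt (fun x => x ^ 2 + b * x + c) (2 * u + b) u :=
  (((hasDerivAt_pow 2 u).add ((hasDerivAt_id u).const_mul b)).add_const c).congr_deriv
    (by simp)

lemma hasDerivAt_gProfile (u : ℝ) :
    HasDerivAt gProfile ((2 * u ^ 2 - 6 * u) * exp (2 * u) + (u ^ 2 + 6 * u) * exp u) u := by
  have h₂ := hasDerivAt_mul_exp_const_mul 2 (hasDerivAt_quadratic (-4) 2 u)
  have h₁ := (hasDerivAt_quadratic 4 (-4) u).mul (hasDerivAt_exp u)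
  refine (((h₂.add h₁).add_const 2).congr_deriv (by ring)).congr_of_eventuallyEq
    (.of_forall fun x => ?_)
  simp only [gProfile, Pi.add_apply, Pi.mul_apply]
  ring

lemma hasDerivAt_deriv_gProfile (u : ℝ) :
    HasDerivAt (deriv gProfile)
      ((4 * u ^ 2 - 8 * u - 6) * exp (2 * u) + (u ^ 2 + 8 * u + 6) * exp u) u := by
  have h₂ := hasDerivAt_mul_exp_const_mul 2 ((hasDerivAt_quadratic (-3) 0 u).const_mul 2)
  have h₁ := (hasDerivAt_quadratic 6 0 u).mul (hasDerivAt_exp u)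
  refine ((h₂.add h₁).congr_deriv (by ring)).congr_of_eventuallyEq (.of_forall fun x => ?_)
  simp only [(hasDerivAt_gProfile x).deriv, Pi.add_apply, Pi.mul_apply]
  ring

lemma iteratedDeriv_two_gProfile (u : ℝ) :
    iteratedDeriv 2 gProfile u =
      (4 * u ^ 2 - 8 * u - 6) * exp (2 * u) + (u ^ 2 + 8 * u + 6) * exp u := by
  rw [iteratedDeriv_succ, iteratedDeriv_one, (hasDerivAt_deriv_gProfile u).deriv]

lemma iteratedDeriv_two_gProfile_pos {u : ℝ} (hu : 1 + √3 < u) :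
    0 < iteratedDeriv 2 gProfile u := by
  have hsqrt : √3 ^ 2 = 3 := sq_sqrt (by norm_num)
  have hu₀ : 0 < u := by linarith [sqrt_nonneg 3]
  have hlead : 0 < 4 * u ^ 2 - 8 * u - 6 := by
    nlinarith [mul_self_lt_mul_self (sqrt_nonneg 3) (by linarith : √3 < u - 1)]
  rw [iteratedDeriv_two_gProfile]
  positivity

theorem gAux_second_deriv_pos (y : ℝ) (hy : (1 + Real.sqrt 3) / Real.pi < y) :
    0 < iteratedDeriv 2 gAux y := by
  rw [gAux_eq_gProfile_comp, iteratedDeriv_comp_const_mul contDiff_gProfile]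
  exact mul_pos (pow_pos pi_pos 2)
    (iteratedDeriv_two_gProfile_pos (by rwa [div_lt_iff₀' pi_pos] at hy))
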